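/- In the free inverse semigroup on two generators x, y, the only terms w(x,y) in the language of inverse semigroups satisfying the three identities w(x, x⁻¹) = x x⁻¹, w(x, w(x⁻¹, x)) = x, and w(w(x, x⁻¹), x) = x (interpreted in the variety of inverse semigroups) are w = xy and w = yx. -/
import Mathlib


/-- An inverse semigroup: a semigroup with a unary inversion satisfying
`(xy)⁻¹ = y⁻¹x⁻¹`, `(x⁻¹)⁻¹ = x`, `x x⁻¹ x = x`, and
`x⁻¹x y⁻¹y = y⁻¹y x⁻¹x`. -/
class InverseSemigroup (M : Type u) extends Semigroup M where
  inv : M → M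
  inv_mul : ∀ a b : M, inv (a * b) = inv b * inv a
  inv_inv : ∀ a : M, inv (inv a) = a
  mul_inv_mul : ∀ a : M, a * inv a * a = a
  idem_comm : ∀ a b : M, inv a * a * (inv b * b) = inv b * b * (inv a * a)

/-- Terms `w(x,y)` in two variables in the language of inverse semigroups
(binary multiplication and unary inversion). -/
inductive InvTerm2 : Type
  | x : InvTerm2
  | y : InvTerm2
  | mul : InvTerm2 → InvTerm2 → InvTerm2
  | inv : InvTerm2 → InvTerm2

/-- Evaluation of a term `w(x,y)` in an inverse semigroup at `x := a`, `y := b`. -/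
def InvTerm2.eval {M : Type u} [InverseSemigroup M] (a b : M) : InvTerm2 → M
  | .x => a
  | .y => b
  | .mul s t => InvTerm2.eval a b s * InvTerm2.eval a b t
  | .inv t => InverseSemigroup.inv (InvTerm2.eval a b t)

universe u

open InverseSemigroup

/-- Literals -/
inductive L : Type | lx | lX | ly | lY
deriving DecidableEq

def L.invL : L → L | .lx => .lX | .lX => .lx | .ly => .lY | .lY => .ly

def evL {M : Type u} [InverseSemigroup M] (a b : M) : L → M
  | .lx => a | .lX => inv a | .ly => b | .lY => inv b

/-- product on Option M, none = formal unit -/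
def omul {M : Type u} [InverseSemigroup M] : Option M → Option M → Option M
  | none, q => q
  | p, none => p
  | some p, some q => some (p * q)

lemma omul_none_right {M : Type u} [InverseSemigroup M] (p : Option M) : omul p none = p := by
  cases p <;> rfl

lemma omul_assoc {M : Type u} [InverseSemigroup M] (p q r : Option M) :
    omul (omul p q) r = omul p (omul q r) := by
  cases p <;> cases q <;> cases r <;> simp [omul, mul_assoc]

def wprod {M : Type u} [InverseSemigroup M] (l : List L) (f : L → M) : Option M :=
  l.foldr (fun c acc => omul (some (f c)) acc) none

@[simp] lemma wprod_nil {M : Type u} [InverseSemigroup M] (f : L → M) : wprod [] f = none := rfl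

@[simp] lemma wprod_cons {M : Type u} [InverseSemigroup M] (c : L) (l : List L) (f : L → M) :
    wprod (c :: l) f = omul (some (f c)) (wprod l f) := rfl

lemma wprod_append {M : Type u} [InverseSemigroup M] (l₁ l₂ : List L) (f : L → M) :
    wprod (l₁ ++ l₂) f = omul (wprod l₁ f) (wprod l₂ f) := by
  induction l₁ with
  | nil => simp [wprod_nil, omul]
  | cons c t ih => simp [wprod_cons, ih, omul_assoc]

def oinv {M : Type u} [InverseSemigroup M] : Option M → Option M
  | none => none
  | some p => some (inv p)

lemma oinv_omul {M : Type u} [InverseSemigroup M] (p q : Option M) :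
    oinv (omul p q) = omul (oinv q) (oinv p) := by
  cases p <;> cases q <;> simp [omul, oinv, inv_mul]

lemma wprod_rev_inv {M : Type u} [InverseSemigroup M] (l : List L) (f : L → M)
    (hf : ∀ c, f (L.invL c) = inv (f c)) :
    wprod (l.reverse.map L.invL) f = oinv (wprod l f) := by
  induction l with
  | nil => rfl
  | cons c t ih =>
    simp only [List.reverse_cons, List.map_append, List.map_cons, List.map_nil]
    rw [show (t.reverse.map L.invL ++ [L.invL c]) = t.reverse.map L.invL ++ [L.invL c] from rfl,
      wprod_append, ih, wprod_cons, wprod_nil, omul_none_right, hf, wprod_cons, oinv_omul]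
    rfl

def wordOf : InvTerm2 → List L
  | .x => [.lx]
  | .y => [.ly]
  | .mul s t => wordOf s ++ wordOf t
  | .inv t => (wordOf t).reverse.map L.invL

lemma wordOf_ne_nil (t : InvTerm2) : wordOf t ≠ [] := by
  induction t with
  | x => simp [wordOf]
  | y => simp [wordOf]
  | mul s t ihs iht => simp [wordOf, ihs]
  | inv t iht => simp [wordOf, iht]

lemma evL_invL {M : Type u} [InverseSemigroup M] (a b : M) (c : L) :
    evL a b (L.invL c) = inv (evL a b c) := by
  cases c <;> simp [L.invL, evL, InverseSemigroup.inv_inv]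

lemma wprod_wordOf {M : Type u} [InverseSemigroup M] (a b : M) (t : InvTerm2) :
    wprod (wordOf t) (evL a b) = some (t.eval a b) := by
  induction t with
  | x => rfl
  | y => rfl
  | mul s t ihs iht =>
    rw [wordOf, wprod_append, ihs, iht]; rfl
  | inv t iht =>
    rw [wordOf, wprod_rev_inv _ _ (evL_invL a b), iht]; rfl


/-- shift of a set of integers -/
def sh (g : ℤ) (S : Set ℤ) : Set ℤ := {z | z - g ∈ S}

@[simp] lemma mem_sh {g z : ℤ} {S : Set ℤ} : z ∈ sh g S ↔ z - g ∈ S := Iff.rfl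

lemma sh_sh (g h : ℤ) (S : Set ℤ) : sh g (sh h S) = sh (g + h) S := by
  ext z; simp [sh, sub_sub]

@[simp] lemma sh_zero (S : Set ℤ) : sh 0 S = S := by ext z; simp [sh]

lemma sh_union (g : ℤ) (S T : Set ℤ) : sh g (S ∪ T) = sh g S ∪ sh g T := by
  ext z; exact Iff.rfl

@[simp] lemma sh_empty (g : ℤ) : sh g (∅ : Set ℤ) = ∅ := by ext z; simp [sh]

abbrev M0 : Type := Set ℤ × ℤ

def M0.mul (p q : M0) : M0 := ⟨p.1 ∪ sh p.2 q.1, p.2 + q.2⟩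
def M0.inv (p : M0) : M0 := ⟨sh (-p.2) p.1, -p.2⟩

instance : InverseSemigroup M0 where
  mul := M0.mul
  mul_assoc p q r := by
    show M0.mul (M0.mul p q) r = M0.mul p (M0.mul q r)
    unfold M0.mul
    refine Prod.ext ?_ (add_assoc _ _ _)
    simp only [sh_union, sh_sh, Set.union_assoc]
  inv := M0.inv
  inv_mul p q := by
    show M0.inv (M0.mul p q) = M0.mul (M0.inv q) (M0.inv p)
    unfold M0.mul M0.inv
    refine Prod.ext ?_ (by ring)
    simp only [sh_union, sh_sh]
    rw [Set.union_comm]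
    congr 2 <;> ring
  inv_inv p := by
    show M0.inv (M0.inv p) = p
    unfold M0.inv
    refine Prod.ext ?_ (neg_neg _)
    simp [sh_sh]
  mul_inv_mul p := by
    show M0.mul (M0.mul p (M0.inv p)) p = p
    unfold M0.mul M0.inv
    refine Prod.ext ?_ (by ring)
    simp [sh_union, sh_sh, sh_zero]
  idem_comm p q := by
    show M0.mul (M0.mul (M0.inv p) p) (M0.mul (M0.inv q) q) =
      M0.mul (M0.mul (M0.inv q) q) (M0.mul (M0.inv p) p)
    unfold M0.mul M0.inv
    refine Prod.ext ?_ (by ring)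
    simp only [sh_union, sh_sh, Set.union_self, neg_add_cancel, sh_zero, zero_add]
    exact Set.union_comm _ _

lemma M0_mul_def (p q : M0) : p * q = ⟨p.1 ∪ sh p.2 q.1, p.2 + q.2⟩ := rfl
lemma M0_inv_def (p : M0) : InverseSemigroup.inv p = ⟨sh (-p.2) p.1, -p.2⟩ := rfl

/-- ULift an inverse semigroup into any universe. -/
instance instULiftIS {M : Type} [InverseSemigroup M] : InverseSemigroup (ULift.{u} M) where
  mul p q := ⟨p.down * q.down⟩
  mul_assoc p q r := congrArg ULift.up (mul_assoc _ _ _)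
  inv p := ⟨inv p.down⟩
  inv_mul p q := congrArg ULift.up (inv_mul _ _)
  inv_inv p := congrArg ULift.up (inv_inv _)
  mul_inv_mul p := congrArg ULift.up (mul_inv_mul _)
  idem_comm p q := congrArg ULift.up (idem_comm _ _)

@[simp] lemma ulift_mul {M : Type} [InverseSemigroup M] (p q : ULift.{u} M) :
    (p * q).down = p.down * q.down := rfl
@[simp] lemma ulift_inv {M : Type} [InverseSemigroup M] (p : ULift.{u} M) :
    (inv p).down = inv p.down := rfl

lemma ulift_eval {M : Type} [InverseSemigroup M] (a b : M) (t : InvTerm2) :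
    (InvTerm2.eval (ULift.up.{u} a) (ULift.up b) t).down = t.eval a b := by
  induction t with
  | x => rfl
  | y => rfl
  | mul s t ihs iht => rw [InvTerm2.eval, InvTerm2.eval, ulift_mul, ihs, iht]
  | inv t iht => rw [InvTerm2.eval, InvTerm2.eval, ulift_inv, iht]

/-- tree (set of visited vertices) of a word under a letter-assignment -/
def wtree (f : L → M0) : List L → Set ℤ
  | [] => ∅
  | c :: t => (f c).1 ∪ sh (f c).2 (wtree f t)

/-- final position of a word under a letter-assignment -/
def wpos (f : L → M0) : List L → ℤ
  | [] => 0
  | c :: t => (f c).2 + wpos f t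

lemma wprod_tree (f : L → M0) : ∀ (l : List L), l ≠ [] →
    wprod l f = some (wtree f l, wpos f l) := by
  intro l
  induction l with
  | nil => intro h; exact absurd rfl h
  | cons c t ih =>
    intro _
    rcases eq_or_ne t [] with rfl | ht
    · simp [wprod, omul, wtree, wpos]
    · rw [wprod_cons, ih ht]
      show some ((f c) * _) = _
      rw [M0_mul_def]
      rfl

/-- key constants in M0 -/
def P : M0 := ⟨{0, 1}, 1⟩
def N : M0 := ⟨{-1, 0}, -1⟩
def F0 : M0 := ⟨{0, 1}, 0⟩
def E0 : M0 := ⟨{-1, 0}, 0⟩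

lemma inv_P : inv P = N := by
  rw [M0_inv_def]
  refine Prod.ext ?_ rfl
  show sh (-1) {0,1} = {-1,0}
  ext z; simp [sh]; omega

lemma inv_N : inv N = P := by
  rw [M0_inv_def]
  refine Prod.ext ?_ rfl
  show sh (1) {-1,0} = {0,1}
  ext z; simp [sh]; omega

lemma inv_F0 : inv F0 = F0 := by
  rw [M0_inv_def]
  refine Prod.ext ?_ rfl
  show sh 0 {0,1} = {0,1}
  simp

lemma inv_E0 : inv E0 = E0 := by
  rw [M0_inv_def]
  refine Prod.ext ?_ rfl
  show sh 0 {-1,0} = {-1,0}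
  simp

lemma P_mul_invP : P * inv P = (⟨{0,1}, 0⟩ : M0) := by
  rw [inv_P, M0_mul_def]
  refine Prod.ext ?_ rfl
  show ({0,1} : Set ℤ) ∪ sh 1 {-1,0} = {0,1}
  ext z; simp [sh]; omega

/-- negation of a set of integers -/
def negS (S : Set ℤ) : Set ℤ := {z | -z ∈ S}

lemma negS_union (S T : Set ℤ) : negS (S ∪ T) = negS S ∪ negS T := by
  ext z; exact Iff.rfl

lemma negS_sh (g : ℤ) (S : Set ℤ) : negS (sh g S) = sh (-g) (negS S) := by
  ext z
  show -z - g ∈ S ↔ -(z - -g) ∈ S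
  rw [show -(z - -g) = -z - g by ring]

/-- the assignments -/
def σ1 : L → M0 := evL P (inv P)
def σi : L → M0 := evL (inv P) P
def σ2 : L → M0 := evL P E0
def σ3 : L → M0 := evL F0 P

lemma σi_neg (c : L) : (σi c).1 = negS (σ1 c).1 ∧ (σi c).2 = -((σ1 c).2) := by
  cases c <;>
    simp only [σ1, σi, evL, inv_P, inv_N, InverseSemigroup.inv_inv] <;>
    refine ⟨?_, by norm_num [P, N]⟩ <;> ext z <;> simp [P, N, negS] <;> omega

lemma tree_neg : ∀ l : List L, wtree σi l = negS (wtree σ1 l) ∧ wpos σi l = -(wpos σ1 l) := by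
  intro l
  induction l with
  | nil =>
    constructor
    · ext z; simp [wtree, negS]
    · simp [wpos]
  | cons c t ih =>
    obtain ⟨iht, ihp⟩ := ih
    obtain ⟨hc1, hc2⟩ := σi_neg c
    constructor
    · rw [wtree, wtree, negS_union, negS_sh, iht, hc1, hc2]
    · rw [wpos, wpos, ihp, hc2]; ring

/-- automaton states -/
inductive St : Type | S | A | B

/-- The language forced by the hypotheses: from S, words look like
`x ((X x) | (y (Y (x-loops...))))` — formally: -/
inductive W : St → List L → Prop
  | nilB : W .B []
  | consS {t} : W .A t → W .S (.lx :: t)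
  | consAX {t} : W .S t → W .A (.lX :: t)
  | consAy {t} : W .B t → W .A (.ly :: t)
  | consBY {t} : W .A t → W .B (.lY :: t)

section Semantics
variable {M : Type u} [InverseSemigroup M]

lemma W_sem (a b : M) : ∀ {s : St} {t : List L}, W s t →
    (match s with
     | .S => wprod t (evL a b) = some (a * b)
     | .A => wprod t (evL a b) = some b ∨ wprod t (evL a b) = some (inv a * (a * b))
     | .B => wprod t (evL a b) = none ∨ wprod t (evL a b) = some (inv b * b) ∨
         wprod t (evL a b) = some (inv b * (inv a * (a * b)))) := by
  intro s t h
  induction h with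
  | nilB => exact Or.inl rfl
  | consS _ ih =>
    rcases ih with h' | h' <;> rw [wprod_cons, h'] <;> show some _ = _
    · rfl
    · -- a * (a⁻¹ * (a * b)) = a * b
      refine congrArg some ?_
      show a * (inv a * (a * b)) = a * b
      rw [← mul_assoc, ← mul_assoc, mul_inv_mul]
  | consAX _ ih =>
    rw [wprod_cons, ih]
    exact Or.inr rfl
  | consAy _ ih =>
    rcases ih with h' | h' | h' <;> rw [wprod_cons, h']
    · exact Or.inl rfl
    · -- b * (b⁻¹ * b) = b
      refine Or.inl (congrArg some ?_)
      show b * (inv b * b) = b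
      rw [← mul_assoc, mul_inv_mul]
    · -- b * (b⁻¹ * (a⁻¹ * (a * b))) = a⁻¹ * (a * b)
      refine Or.inr (congrArg some ?_)
      show b * (inv b * (inv a * (a * b))) = inv a * (a * b)
      have hb : b * inv b = inv (inv b) * inv b := by rw [InverseSemigroup.inv_inv]
      calc b * (inv b * (inv a * (a * b)))
          = (b * inv b) * (inv a * a) * b := by simp only [mul_assoc]
        _ = (inv (inv b) * inv b) * (inv a * a) * b := by rw [← hb]
        _ = (inv a * a) * (inv (inv b) * inv b) * b := by rw [idem_comm]
        _ = (inv a * a) * (b * inv b) * b := by rw [← hb]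
        _ = inv a * (a * (b * inv b * b)) := by simp only [mul_assoc]
        _ = inv a * (a * b) := by rw [mul_inv_mul]
  | consBY _ ih =>
    rcases ih with h' | h' <;> rw [wprod_cons, h']
    · exact Or.inr (Or.inl rfl)
    · exact Or.inr (Or.inr rfl)

lemma W_S_eval (a b : M) {t : List L} (h : W .S t) : wprod t (evL a b) = some (a * b) :=
  W_sem a b h

end Semantics

/-- letter data for σ2 and σ3 -/
lemma σ2_data : σ2 .lx = P ∧ σ2 .lX = N ∧ σ2 .ly = E0 ∧ σ2 .lY = E0 :=
  ⟨rfl, by simp only [σ2, evL, inv_P], rfl, by simp only [σ2, evL, inv_E0]⟩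

lemma σ3_data : σ3 .lx = F0 ∧ σ3 .lX = F0 ∧ σ3 .ly = P ∧ σ3 .lY = N :=
  ⟨rfl, by simp only [σ3, evL, inv_F0], rfl, by simp only [σ3, evL, inv_P]⟩

/-- Main extraction induction. -/
lemma extract : ∀ (t : List L) (p q : ℤ),
    p = 1 - wpos σ2 t → q = 1 - wpos σ3 t →
    (∀ z ∈ wtree σ2 t, p + z = 0 ∨ p + z = 1) →
    (∀ z ∈ wtree σ3 t, q + z = 0 ∨ q + z = 1) →
    ((p = 0 ∧ q = 0 → W .S t) ∧ (p = 1 ∧ q = 0 → W .A t) ∧ (p = 1 ∧ q = 1 → W .B t)) := by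
  intro t
  induction t with
  | nil =>
    intro p q hp hq _ _
    simp only [wpos] at hp hq
    refine ⟨?_, ?_, fun _ => W.nilB⟩ <;> omega
  | cons c t ih =>
    intro p q hp hq h2 h3
    obtain ⟨hx2, hX2, hy2, hY2⟩ := σ2_data
    obtain ⟨hx3, hX3, hy3, hY3⟩ := σ3_data
    -- facts about the head letter's tree under σ2, σ3, and the tail conditions
    have h2head : ∀ z ∈ (σ2 c).1, p + z = 0 ∨ p + z = 1 := by
      intro z hz; exact h2 z (Or.inl hz)
    have h3head : ∀ z ∈ (σ3 c).1, q + z = 0 ∨ q + z = 1 := by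
      intro z hz; exact h3 z (Or.inl hz)
    have h2tail : ∀ z ∈ wtree σ2 t, (p + (σ2 c).2) + z = 0 ∨ (p + (σ2 c).2) + z = 1 := by
      intro z hz
      have : ((σ2 c).2 + z) ∈ sh (σ2 c).2 (wtree σ2 t) := by
        simp only [mem_sh, add_sub_cancel_left]; exact hz
      have := h2 _ (Or.inr this)
      omega
    have h3tail : ∀ z ∈ wtree σ3 t, (q + (σ3 c).2) + z = 0 ∨ (q + (σ3 c).2) + z = 1 := by
      intro z hz
      have : ((σ3 c).2 + z) ∈ sh (σ3 c).2 (wtree σ3 t) := by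
        simp only [mem_sh, add_sub_cancel_left]; exact hz
      have := h3 _ (Or.inr this)
      omega
    have hp' : p + (σ2 c).2 = 1 - wpos σ2 t := by
      rw [wpos] at hp; omega
    have hq' : q + (σ3 c).2 = 1 - wpos σ3 t := by
      rw [wpos] at hq; omega
    have IH := ih (p + (σ2 c).2) (q + (σ3 c).2) hp' hq' h2tail h3tail
    obtain ⟨ihS, ihA, ihB⟩ := IH
    cases c
    case lx =>
      rw [hx2] at h2head hp' ihS ihA ihB
      rw [hx3] at h3head hq' ihS ihA ihB
      -- P.1 = {0,1}, P.2 = 1 ; F0.1 = {0,1}, F0.2 = 0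
      have g20 := h2head 0 (by simp [P])
      have g21 := h2head 1 (by simp [P])
      have g30 := h3head 0 (by simp [F0])
      have g31 := h3head 1 (by simp [F0])
      have hP2 : (P : M0).2 = 1 := rfl
      have hF2 : (F0 : M0).2 = 0 := rfl
      rw [hP2] at ihS ihA ihB
      rw [hF2] at ihS ihA ihB
      refine ⟨fun ⟨e1, e2⟩ => ?_, fun ⟨e1, e2⟩ => ?_, fun ⟨e1, e2⟩ => ?_⟩
      · exact W.consS (ihA ⟨by omega, by omega⟩)
      · omega
      · omega
    case lX =>
      rw [hX2] at h2head hp' ihS ihA ihB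
      rw [hX3] at h3head hq' ihS ihA ihB
      have g20 := h2head (-1) (by simp [N])
      have g21 := h2head 0 (by simp [N])
      have g30 := h3head 0 (by simp [F0])
      have g31 := h3head 1 (by simp [F0])
      have hN2 : (N : M0).2 = -1 := rfl
      have hF2 : (F0 : M0).2 = 0 := rfl
      rw [hN2] at ihS ihA ihB
      rw [hF2] at ihS ihA ihB
      refine ⟨fun ⟨e1, e2⟩ => ?_, fun ⟨e1, e2⟩ => ?_, fun ⟨e1, e2⟩ => ?_⟩
      · omega
      · exact W.consAX (ihS ⟨by omega, by omega⟩)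
      · omega
    case ly =>
      rw [hy2] at h2head hp' ihS ihA ihB
      rw [hy3] at h3head hq' ihS ihA ihB
      have g20 := h2head (-1) (by simp [E0])
      have g21 := h2head 0 (by simp [E0])
      have g30 := h3head 0 (by simp [P])
      have g31 := h3head 1 (by simp [P])
      have hE2 : (E0 : M0).2 = 0 := rfl
      have hP2 : (P : M0).2 = 1 := rfl
      rw [hE2] at ihS ihA ihB
      rw [hP2] at ihS ihA ihB
      refine ⟨fun ⟨e1, e2⟩ => ?_, fun ⟨e1, e2⟩ => ?_, fun ⟨e1, e2⟩ => ?_⟩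
      · omega
      · exact W.consAy (ihB ⟨by omega, by omega⟩)
      · omega
    case lY =>
      rw [hY2] at h2head hp' ihS ihA ihB
      rw [hY3] at h3head hq' ihS ihA ihB
      have g20 := h2head (-1) (by simp [E0])
      have g21 := h2head 0 (by simp [E0])
      have g30 := h3head (-1) (by simp [N])
      have g31 := h3head 0 (by simp [N])
      have hE2 : (E0 : M0).2 = 0 := rfl
      have hN2 : (N : M0).2 = -1 := rfl
      rw [hE2] at ihS ihA ihB
      rw [hN2] at ihS ihA ihB
      refine ⟨fun ⟨e1, e2⟩ => ?_, fun ⟨e1, e2⟩ => ?_, fun ⟨e1, e2⟩ => ?_⟩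
      · omega
      · omega
      · exact W.consBY (ihA ⟨by omega, by omega⟩)

lemma ulift_eval' {M : Type} [InverseSemigroup M] (a b : M) (t : InvTerm2) :
    InvTerm2.eval (ULift.up.{u} a) (ULift.up b) t = ULift.up (t.eval a b) :=
  ULift.ext _ _ (ulift_eval a b t)

lemma negS_01 : negS {0, 1} = ({-1, 0} : Set ℤ) := by
  ext z; simp [negS]; omega

/-- The only terms `w(x,y)` in the language of inverse semigroups
satisfying the identities `w(x, x⁻¹) = x x⁻¹`, `w(x, w(x⁻¹, x)) = x` and
`w(w(x, x⁻¹), x) = x` in the variety of all inverse semigroups are `w = xy` and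
`w = yx` (i.e. `w` induces the operation `xy` or the operation `yx` in every
inverse semigroup). -/
theorem stmt17 (w : InvTerm2)
    (h1 : ∀ (M : Type u) [InverseSemigroup M] (a : M),
      w.eval a (InverseSemigroup.inv a) = a * InverseSemigroup.inv a)
    (h2 : ∀ (M : Type u) [InverseSemigroup M] (a : M),
      w.eval a (w.eval (InverseSemigroup.inv a) a) = a)
    (h3 : ∀ (M : Type u) [InverseSemigroup M] (a : M),
      w.eval (w.eval a (InverseSemigroup.inv a)) a = a) :
    (∀ (M : Type u) [InverseSemigroup M] (a b : M), w.eval a b = a * b) ∨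
    (∀ (M : Type u) [InverseSemigroup M] (a b : M), w.eval a b = b * a) := by
  left
  set uw := wordOf w with huw
  have hune : uw ≠ [] := wordOf_ne_nil w
  have hupinv : InverseSemigroup.inv (ULift.up.{u} P) = ULift.up (inv P) := rfl
  -- h1 in M0
  have E1 : w.eval P (inv P) = (⟨{0,1}, 0⟩ : M0) := by
    have := h1 (ULift.{u} M0) (ULift.up P)
    rw [hupinv, ulift_eval'] at this
    have := congrArg ULift.down this
    simp only [ULift.down_up, ulift_mul] at this
    rw [this, P_mul_invP]
  -- tree and pos of σ1
  have T1 : wtree σ1 uw = {0, 1} ∧ wpos σ1 uw = 0 := by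
    have h := wprod_tree σ1 uw hune
    rw [show wprod uw σ1 = some (w.eval P (inv P)) from wprod_wordOf P (inv P) w, E1] at h
    have h' := Option.some.inj h.symm
    exact ⟨congrArg Prod.fst h', congrArg Prod.snd h'⟩
  -- inner eval of h2
  have Einner : w.eval (inv P) P = E0 := by
    have h := wprod_tree σi uw hune
    rw [show wprod uw σi = some (w.eval (inv P) P) from wprod_wordOf (inv P) P w] at h
    obtain ⟨ht, hp⟩ := tree_neg uw
    rw [ht, hp, T1.1, T1.2, negS_01] at h
    exact Option.some.inj h
  -- h2 in M0
  have E2 : w.eval P E0 = P := by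
    have := h2 (ULift.{u} M0) (ULift.up P)
    simp only [hupinv, ulift_eval'] at this
    rw [Einner] at this
    have := congrArg ULift.down this
    simpa using this
  -- h3 in M0
  have E3 : w.eval F0 P = P := by
    have := h3 (ULift.{u} M0) (ULift.up P)
    simp only [hupinv, ulift_eval'] at this
    rw [E1, show (⟨{0,1}, 0⟩ : M0) = F0 from rfl] at this
    have := congrArg ULift.down this
    simpa using this
  -- tree/pos for σ2 and σ3
  have T2 : wtree σ2 uw = {0, 1} ∧ wpos σ2 uw = 1 := by
    have h := wprod_tree σ2 uw hune
    rw [show wprod uw σ2 = some (w.eval P E0) from wprod_wordOf P E0 w, E2] at h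
    have h' := Option.some.inj h.symm
    exact ⟨congrArg Prod.fst h', congrArg Prod.snd h'⟩
  have T3 : wtree σ3 uw = {0, 1} ∧ wpos σ3 uw = 1 := by
    have h := wprod_tree σ3 uw hune
    rw [show wprod uw σ3 = some (w.eval F0 P) from wprod_wordOf F0 P w, E3] at h
    have h' := Option.some.inj h.symm
    exact ⟨congrArg Prod.fst h', congrArg Prod.snd h'⟩
  -- extraction
  have hW : W .S uw := by
    have := extract uw 0 0 (by rw [T2.2]; norm_num) (by rw [T3.2]; norm_num)
      (by intro z hz; rw [T2.1] at hz; rcases hz with h | h <;> simp_all)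
      (by intro z hz; rw [T3.1] at hz; rcases hz with h | h <;> simp_all)
    exact this.1 ⟨rfl, rfl⟩
  -- conclusion
  intro M _ a b
  have := W_S_eval a b hW
  rw [wprod_wordOf a b w] at this
  exact Option.some.inj this
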